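/- The element x^{−ε,0} is central in the Lie algebra (𝒜, [·,·]), i.e. [x^{−ε,0}, u] = 0 for every u ∈ 𝒜. -/

import Mathlib

open scoped BigOperators
namespace TwistedHamiltonian
def Jmon {n : ℕ} (J : Fin (2 * n + 2) → Bool) : AddSubmonoid (Fin (2 * n + 2) → ℕ) where
  carrier := {i | ∀ p, J p = false → i p = 0}
  add_mem' := by
    intro a b ha hb p hp
    simp [ha p hp, hb p hp]
  zero_mem' := by
    intro p _
    rfl

structure Setup (F : Type*) [Field F] (Γ : Type*) [AddCommGroup Γ] (n : ℕ) where
  J : Fin (2 * n + 2) → Bool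
  phi : Γ →+ Γ →+ F
  phiv : Fin (2 * n + 2) → Γ →+ F
  sg : Fin n → Γ
  eps : Γ

namespace Setup

variable {F : Type*} [Field F] {Γ : Type*} [AddCommGroup Γ] {n : ℕ}

abbrev A (S : Setup F Γ n) : Type _ :=
  AddMonoidAlgebra F (Γ × Jmon S.J)

noncomputable def xx (S : Setup F Γ n) (α : Γ) (i : Jmon S.J) : S.A :=
  AddMonoidAlgebra.single (α, i) 1

def dec (S : Setup F Γ n) (p : Fin (2 * n + 2)) (i : Jmon S.J) : Jmon S.J :=
  ⟨Function.update (i : Fin (2 * n + 2) → ℕ) p ((i : Fin (2 * n + 2) → ℕ) p - 1), by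
    intro q hq
    rcases eq_or_ne q p with rfl | h
    · have h0 : (i : Fin (2 * n + 2) → ℕ) q = 0 := i.2 q hq
      simp [h0]
    · rw [Function.update_of_ne h]
      exact i.2 q hq⟩

noncomputable def pd (S : Setup F Γ n) (p : Fin (2 * n + 2)) : S.A →ₗ[F] S.A :=
  (Finsupp.lsum F fun a : Γ × Jmon S.J =>
    LinearMap.toSpanSingleton F S.A
      (S.phiv p a.1 • S.xx a.1 a.2 +
        (((a.2 : Fin (2 * n + 2) → ℕ) p : F)) • S.xx a.1 (S.dec p a.2))) ∘ₗ (AddMonoidAlgebra.coeffLinearEquiv F).toLinearMap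

/-- The twisted Hamiltonian bracket of two basis elements. -/
noncomputable def brkBasis (S : Setup F Γ n) (a b : Γ × Jmon S.J) : S.A :=
  S.xx S.eps 0 *
      ((∑ t : Fin n,
          S.xx (S.sg t) 0 *
            (S.pd ⟨2 * t.1 + 2, by have := t.isLt; omega⟩ (S.xx a.1 a.2) *
                S.pd ⟨2 * t.1 + 3, by have := t.isLt; omega⟩ (S.xx b.1 b.2) -
              S.pd ⟨2 * t.1 + 2, by have := t.isLt; omega⟩ (S.xx b.1 b.2) *
                S.pd ⟨2 * t.1 + 3, by have := t.isLt; omega⟩ (S.xx a.1 a.2))) +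
        S.phi a.1 b.1 • (S.xx a.1 a.2 * S.xx b.1 b.2)) +
    ((S.pd ⟨0, by omega⟩ (S.xx a.1 a.2) + S.xx a.1 a.2) *
        S.pd ⟨1, by omega⟩ (S.xx b.1 b.2) -
      (S.pd ⟨0, by omega⟩ (S.xx b.1 b.2) + S.xx b.1 b.2) *
        S.pd ⟨1, by omega⟩ (S.xx a.1 a.2))

/-- The twisted Hamiltonian bracket `[·,·]` on `𝒜`, as a bilinear map. -/
noncomputable def brk (S : Setup F Γ n) : S.A →ₗ[F] S.A →ₗ[F] S.A :=
  (Finsupp.lsum F fun a : Γ × Jmon S.J =>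
    LinearMap.toSpanSingleton F (S.A →ₗ[F] S.A)
      ((Finsupp.lsum F fun b : Γ × Jmon S.J =>
        LinearMap.toSpanSingleton F S.A (S.brkBasis a b)) ∘ₗ (AddMonoidAlgebra.coeffLinearEquiv F).toLinearMap)) ∘ₗ (AddMonoidAlgebra.coeffLinearEquiv F).toLinearMap

/-- The action of a basis element on a basis element in the module `𝒜_{ξ,f}`. -/
noncomputable def rhoBasis (S : Setup F Γ n) (ξ : Fin (2 * n + 2) → F) (f : Γ →+ F)
    (a b : Γ × Jmon S.J) : S.A :=
  S.xx S.eps 0 *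
      ((∑ t : Fin n,
          S.xx (S.sg t) 0 *
            (S.pd ⟨2 * t.1 + 2, by have := t.isLt; omega⟩ (S.xx a.1 a.2) *
                (S.pd ⟨2 * t.1 + 3, by have := t.isLt; omega⟩ (S.xx b.1 b.2) +
                  ξ ⟨2 * t.1 + 3, by have := t.isLt; omega⟩ • S.xx b.1 b.2) -
              S.pd ⟨2 * t.1 + 3, by have := t.isLt; omega⟩ (S.xx a.1 a.2) *
                (S.pd ⟨2 * t.1 + 2, by have := t.isLt; omega⟩ (S.xx b.1 b.2) +
                  ξ ⟨2 * t.1 + 2, by have := t.isLt; omega⟩ • S.xx b.1 b.2))) +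
        (S.phi a.1 b.1 + f a.1) • (S.xx a.1 a.2 * S.xx b.1 b.2)) +
    ((S.pd ⟨0, by omega⟩ (S.xx a.1 a.2) + S.xx a.1 a.2) *
        (S.pd ⟨1, by omega⟩ (S.xx b.1 b.2) + ξ ⟨1, by omega⟩ • S.xx b.1 b.2) -
      S.pd ⟨1, by omega⟩ (S.xx a.1 a.2) *
        (S.pd ⟨0, by omega⟩ (S.xx b.1 b.2) + ξ ⟨0, by omega⟩ • S.xx b.1 b.2))

/-- The action of `𝒜` on the module `𝒜_{ξ,f}`, as a bilinear map. -/
noncomputable def rho (S : Setup F Γ n) (ξ : Fin (2 * n + 2) → F) (f : Γ →+ F) :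
    S.A →ₗ[F] S.A →ₗ[F] S.A :=
  (Finsupp.lsum F fun a : Γ × Jmon S.J =>
    LinearMap.toSpanSingleton F (S.A →ₗ[F] S.A)
      ((Finsupp.lsum F fun b : Γ × Jmon S.J =>
        LinearMap.toSpanSingleton F S.A (S.rhoBasis ξ f a b)) ∘ₗ (AddMonoidAlgebra.coeffLinearEquiv F).toLinearMap)) ∘ₗ (AddMonoidAlgebra.coeffLinearEquiv F).toLinearMap

/-- The span `F x^{-ε,0}` of the central element. -/
noncomputable def C (S : Setup F Γ n) : Submodule F S.A :=
  Submodule.span F {S.xx (-S.eps) 0}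

/-- `σ = Σ_{s=1}^{n-1} σ_{2s+1} - 2ε`. -/
def sigmaEl (S : Setup F Γ n) : Γ :=
  (∑ t : Fin n, S.sg t) - 2 • S.eps

end Setup

/-!
Since `φ₁(-ε) = -1` and `φ_p(ε) = 0` for `p ≥ 2`, the element `x^{-ε,0}` is killed by `∂₁ + 1`
and by every `∂_p` with `p ≥ 2`; since `ε ∈ Rad_φ`, also `φ(-ε, β) = 0`. Each term of the bracket
`[x^{-ε,0}, x^{β,j}]` contains one of these factors, so it vanishes on a basis and hence on `𝒜`.
-/

namespace Setup

variable {F : Type*} [Field F] {Γ : Type*} [AddCommGroup Γ] {n : ℕ} (S : Setup F Γ n)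

theorem pd_xx (p : Fin (2 * n + 2)) (α : Γ) (i : Jmon S.J) :
    S.pd p (S.xx α i) =
      S.phiv p α • S.xx α i + ((i : Fin (2 * n + 2) → ℕ) p : F) • S.xx α (S.dec p i) := by
  simp only [pd, xx, LinearMap.comp_apply, LinearEquiv.coe_coe,
    AddMonoidAlgebra.coeffLinearEquiv_apply, AddMonoidAlgebra.coeff_single, Finsupp.lsum_single,
    LinearMap.toSpanSingleton_apply, one_smul]

theorem pd_xx_zero (p : Fin (2 * n + 2)) (α : Γ) :
    S.pd p (S.xx α 0) = S.phiv p α • S.xx α 0 := by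
  simp [pd_xx]

theorem brk_xx (α : Γ) (i : Jmon S.J) (u : S.A) :
    S.brk (S.xx α i) u = u.coeff.sum fun b c => c • S.brkBasis (α, i) b := by
  simp only [brk, xx, LinearMap.comp_apply, LinearEquiv.coe_coe,
    AddMonoidAlgebra.coeffLinearEquiv_apply, AddMonoidAlgebra.coeff_single, Finsupp.lsum_single,
    LinearMap.toSpanSingleton_apply, one_smul]
  rfl

variable {S} in
theorem brkBasis_neg_eps_left (hεrad : ∀ β : Γ, S.phi S.eps β = 0)
    (hεker : ∀ p : Fin (2 * n + 2), p.1 ≠ 0 → S.phiv p S.eps = 0)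
    (hε1 : S.phiv ⟨0, by omega⟩ S.eps = 1) (b : Γ × Jmon S.J) :
    S.brkBasis (-S.eps, 0) b = 0 := by
  have hpd : ∀ p : Fin (2 * n + 2), p.1 ≠ 0 → S.pd p (S.xx (-S.eps) 0) = 0 := fun p hp => by
    rw [pd_xx_zero, map_neg, hεker p hp, neg_zero, zero_smul]
  have hpd0 : S.pd ⟨0, by omega⟩ (S.xx (-S.eps) 0) + S.xx (-S.eps) 0 = 0 := by
    rw [pd_xx_zero, map_neg, hε1, neg_smul, one_smul, neg_add_cancel]
  have hphi : S.phi (-S.eps) b.1 = 0 := by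
    rw [map_neg, AddMonoidHom.neg_apply, hεrad, neg_zero]
  rw [brkBasis, hpd0, hphi]
  simp [hpd]

end Setup

/-- The element `x^{−ε,0}` is central in the Lie algebra
`(𝒜, [·,·])`. -/
theorem xx_neg_eps_central
    {F : Type*} [Field F] {Γ : Type*} [AddCommGroup Γ] {n : ℕ} (S : Setup F Γ n)
    (hεrad : ∀ β : Γ, S.phi S.eps β = 0)
    (hεker : ∀ p : Fin (2 * n + 2), p.1 ≠ 0 → S.phiv p S.eps = 0)
    (hε1 : S.phiv ⟨0, by omega⟩ S.eps = 1) :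
    ∀ u : S.A, S.brk (S.xx (-S.eps) 0) u = 0 := by
  intro u
  simp only [S.brk_xx, Setup.brkBasis_neg_eps_left hεrad hεker hε1, smul_zero,
    Finsupp.sum_fun_zero]

end TwistedHamiltonian
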